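/- Let h be L_h-Lipschitz and suppose every curve in a finite library Π has clearance ≤ 0 (i.e. no policy in Π is certified safe: inf_{τ∈[0,T]} h(σ(τ)) ≤ 0 for all σ ∈ Π). Then every curve σ⋆ with clearance γ⋆ > 0 satisfies δ(Π) ≥ γ⋆/L_h, where δ(Π) = min_{σ∈Π} sup_{τ∈[0,T]} dist(σ⋆(τ), σ(τ)). -/
import Mathlib


/-- Clearance of a curve: infimum of `h` along the curve over `[0,T]`. -/
noncomputable def clearance {X : Type*} (h : X → ℝ) (T : ℝ) (σ : ℝ → X) : ℝ :=
  ⨅ τ : Set.Icc (0:ℝ) T, h (σ τ)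

/-- Sup-distance between two curves over `[0,T]`. -/
noncomputable def supDist {X : Type*} [MetricSpace X] (T : ℝ) (σ₁ σ₂ : ℝ → X) : ℝ :=
  ⨆ τ : Set.Icc (0:ℝ) T, dist (σ₁ τ) (σ₂ τ)

/-- Contrapositive of completeness: if no library member is certified safe, then the
library approximates any strictly safe trajectory with precision at least `γ⋆/L`. -/
theorem incomplete_library_far {X : Type*} [MetricSpace X]
    (h : X → ℝ) (L : ℝ) (hL : 0 < L)
    (hLip : ∀ x y : X, |h x - h y| ≤ L * dist x y)
    (T : ℝ) (hT : 0 < T) (σstar : ℝ → X)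
    (Lib : Finset (ℝ → X)) (hne : Lib.Nonempty)
    (hbdd : ∀ σ ∈ Lib,
      BddAbove (Set.range fun τ : Set.Icc (0:ℝ) T => dist (σstar τ) (σ τ)))
    (hunsafe : ∀ σ ∈ Lib, clearance h T σ ≤ 0)
    (γstar : ℝ) (hγ : γstar = clearance h T σstar) (hγpos : 0 < γstar)
    (hbddγ : BddBelow (Set.range fun τ : Set.Icc (0:ℝ) T => h (σstar τ))) :
    Lib.inf' hne (fun σ => supDist T σstar σ) ≥ γstar / L := by
  have hIcc : Nonempty (Set.Icc (0:ℝ) T) := ⟨⟨0, by constructor <;> [rfl; exact hT.le]⟩⟩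
  apply Finset.le_inf'
  intro σ hσ
  have key : clearance h T σ ≥ γstar - L * supDist T σstar σ := by
    apply le_ciInf
    intro τ
    have h1 : γstar ≤ h (σstar τ) := hγ ▸ ciInf_le hbddγ τ
    have h2 : dist (σstar τ) (σ τ) ≤ supDist T σstar σ := le_ciSup (hbdd σ hσ) τ
    have h3 : |h (σstar τ) - h (σ τ)| ≤ L * dist (σstar τ) (σ τ) := hLip _ _
    have h4 : h (σstar τ) - h (σ τ) ≤ L * supDist T σstar σ :=
      le_trans (le_trans (le_abs_self _) h3) (by nlinarith)
    linarith
  have h0 := hunsafe σ hσ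
  rw [div_le_iff₀ hL]
  nlinarith
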